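/- (Torus exotic symbol, symbol class part) Let κ > 0 and define a : ℤⁿ → ℝ by a(ξ) = ⟨ξ⟩^{-κ} if ξ = 2^k e₁ for some k ∈ ℕ, and a(ξ) = 0 otherwise. Then for every multi-index α ∈ ℕ₀ⁿ there is a constant C_α with |Δ^α a(ξ)| ≤ C_α (1+|ξ|)^{-κ} for all ξ ∈ ℤⁿ, where Δ^α is the forward difference operator; moreover, for ξ_k = 2^k e₁ one has |Δ^{e₁} a(ξ_k)| = ⟨ξ_k⟩^{-κ}, so no estimate of the form |Δ^{e₁} a(ξ)| ≤ C (1+|ξ|)^{-κ-ε} with ε > 0 can hold. -/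

import Mathlib

/-- The Japanese bracket `⟨ξ⟩ = (1 + |ξ|²)^{1/2}` on `ℤⁿ`. -/
noncomputable def jb {n : ℕ} (ξ : Fin n → ℤ) : ℝ :=
  Real.sqrt (1 + ∑ j, ((ξ j : ℝ)) ^ 2)

/-- `|ξ|`, the Euclidean norm on `ℤⁿ`. -/
noncomputable def znorm {n : ℕ} (ξ : Fin n → ℤ) : ℝ :=
  Real.sqrt (∑ j, ((ξ j : ℝ)) ^ 2)

open Classical in
/-- The exotic symbol: `a(ξ) = ⟨ξ⟩^{-κ}` if `ξ = 2^k e₁` for some `k ∈ ℕ`, else `0`. -/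
noncomputable def exoticSymbol (n : ℕ) (hn : 0 < n) (κ : ℝ) : (Fin n → ℤ) → ℝ :=
  fun ξ =>
    if ∃ k : ℕ, ξ = fun j => 2 ^ k * (Pi.single (⟨0, hn⟩ : Fin n) (1 : ℤ) : Fin n → ℤ) j
    then jb ξ ^ (-κ) else 0

/-- The iterated forward difference operator `Δ^α` on functions on `ℤⁿ`, written in
its standard closed form `Δ^α f(ξ) = ∑_{β ≤ α} (-1)^{|α|-|β|} binom(α,β) f(ξ+β)`. -/
noncomputable def fdiff {n : ℕ} (α : Fin n → ℕ) (f : (Fin n → ℤ) → ℝ)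
    (ξ : Fin n → ℤ) : ℝ :=
  ∑ β : (∀ j, Fin (α j + 1)),
    ((-1 : ℝ) ^ (∑ j, (α j - (β j : ℕ))) * ∏ j, (α j).choose (β j)) *
      f (ξ + fun j => ((β j : ℕ) : ℤ))

/-!
Each `Δ^α a(ξ)` is a finite combination of the values `a(ξ + β)` with `0 ≤ β ≤ α`, and
Peetre's inequality `⟨ξ + β⟩^s ≤ (2(1 + |β|))^|s| (1 + |ξ|)^s` shows that all of them decay like
`(1 + |ξ|)^{-κ}`. Differencing gains nothing, because the support of `a` is so sparse:
`2^k e₁ + e₁` is not of the form `2^m e₁` for `k ≥ 1`, hence `Δ^{e₁} a(2^k e₁) = -a(2^k e₁)`.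
-/

open Filter

lemma rpow_le_pow_abs_mul_rpow_of_le_mul {x y K : ℝ} (hx : 0 < x) (hy : 0 < y)
    (hxy : x ≤ K * y) (hyx : y ≤ K * x) (s : ℝ) : x ^ s ≤ K ^ |s| * y ^ s := by
  have hK : 0 < K := pos_of_mul_pos_left (hx.trans_le hxy) hy.le
  rcases le_or_gt 0 s with hs | hs
  · rw [abs_of_nonneg hs, ← Real.mul_rpow hK.le hy.le]
    exact Real.rpow_le_rpow hx.le hxy hs
  · calc x ^ s ≤ (y / K) ^ s :=
          Real.rpow_le_rpow_of_nonpos (by positivity) ((div_le_iff₀' hK).2 hyx) hs.le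
      _ = K ^ |s| * y ^ s := by
          rw [Real.div_rpow hy.le hK.le, abs_of_neg hs, Real.rpow_neg hK.le]; ring

section Norms

variable {n : ℕ}

def euclideanCast (ξ : Fin n → ℤ) : EuclideanSpace ℝ (Fin n) :=
  WithLp.toLp 2 fun j => (ξ j : ℝ)

lemma euclideanCast_add (ξ η : Fin n → ℤ) :
    euclideanCast (ξ + η) = euclideanCast ξ + euclideanCast η := by
  ext j; simp [euclideanCast]

lemma znorm_eq_norm_euclideanCast (ξ : Fin n → ℤ) : znorm ξ = ‖euclideanCast ξ‖ := by
  simp [znorm, euclideanCast, EuclideanSpace.norm_eq]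

lemma znorm_nonneg (ξ : Fin n → ℤ) : 0 ≤ znorm ξ := Real.sqrt_nonneg _

lemma znorm_single (i : Fin n) (c : ℤ) : znorm (Pi.single i c) = |c| := by
  rw [znorm_eq_norm_euclideanCast,
    show euclideanCast (Pi.single i c) = EuclideanSpace.single i (c : ℝ) by
      ext j; by_cases hj : j = i <;> simp [euclideanCast, hj]]
  simp

lemma znorm_le_znorm_of_abs_le {ξ η : Fin n → ℤ} (h : ∀ j, |ξ j| ≤ |η j|) :
    znorm ξ ≤ znorm η :=
  Real.sqrt_le_sqrt <| Finset.sum_le_sum fun j _ => sq_le_sq.2 (by exact_mod_cast h j)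

lemma one_add_znorm_add_le (ξ b : Fin n → ℤ) :
    1 + znorm (ξ + b) ≤ (1 + znorm b) * (1 + znorm ξ) := by
  have h := norm_add_le (euclideanCast ξ) (euclideanCast b)
  simp only [← euclideanCast_add, ← znorm_eq_norm_euclideanCast] at h
  nlinarith [znorm_nonneg ξ, znorm_nonneg b]

lemma one_add_znorm_le_add (ξ b : Fin n → ℤ) :
    1 + znorm ξ ≤ (1 + znorm b) * (1 + znorm (ξ + b)) := by
  have h := norm_sub_le (euclideanCast (ξ + b)) (euclideanCast b)
  rw [euclideanCast_add, add_sub_cancel_right] at h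
  simp only [← euclideanCast_add, ← znorm_eq_norm_euclideanCast] at h
  nlinarith [znorm_nonneg (ξ + b), znorm_nonneg b]

lemma jb_eq_sqrt (ξ : Fin n → ℤ) : jb ξ = √(1 + znorm ξ ^ 2) := by
  rw [jb, znorm, Real.sq_sqrt (Finset.sum_nonneg fun j _ => sq_nonneg _)]

lemma jb_pos (ξ : Fin n → ℤ) : 0 < jb ξ := by
  rw [jb_eq_sqrt]; positivity

lemma jb_le_one_add_znorm (ξ : Fin n → ℤ) : jb ξ ≤ 1 + znorm ξ := by
  rw [jb_eq_sqrt]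
  exact Real.sqrt_le_iff.2 ⟨by linarith [znorm_nonneg ξ], by nlinarith [znorm_nonneg ξ]⟩

lemma one_add_znorm_le_two_mul_jb (ξ : Fin n → ℤ) : 1 + znorm ξ ≤ 2 * jb ξ := by
  have := znorm_nonneg ξ
  rw [jb_eq_sqrt, ← div_le_iff₀' two_pos, Real.le_sqrt (by positivity)]
  · nlinarith [sq_nonneg (1 - znorm ξ)]
  · positivity

lemma jb_add_rpow_le (ξ b : Fin n → ℤ) (s : ℝ) :
    jb (ξ + b) ^ s ≤ (2 * (1 + znorm b)) ^ |s| * (1 + znorm ξ) ^ s := by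
  have hb := znorm_nonneg b
  refine rpow_le_pow_abs_mul_rpow_of_le_mul (jb_pos _) (by linarith [znorm_nonneg ξ]) ?_ ?_ s
  · nlinarith [jb_le_one_add_znorm (ξ + b), one_add_znorm_add_le ξ b, znorm_nonneg ξ]
  · nlinarith [one_add_znorm_le_two_mul_jb (ξ + b), one_add_znorm_le_add ξ b,
      znorm_nonneg (ξ + b)]

end Norms

section Differences

variable {n : ℕ}

lemma abs_fdiff_le (α : Fin n → ℕ) (f : (Fin n → ℤ) → ℝ) (ξ : Fin n → ℤ) :
    |fdiff α f ξ| ≤ ∑ β : (∀ j, Fin (α j + 1)),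
      ((∏ j, (α j).choose (β j) : ℕ) : ℝ) * |f (ξ + fun j => ((β j : ℕ) : ℤ))| := by
  refine (Finset.abs_sum_le_sum_abs _ _).trans (Finset.sum_le_sum fun β _ => ?_)
  rw [abs_mul, abs_mul, abs_pow, abs_neg, abs_one, one_pow, one_mul,
    abs_of_nonneg (by positivity)]

lemma exists_abs_fdiff_le_of_abs_le_jb_rpow {f : (Fin n → ℤ) → ℝ} {s : ℝ}
    (hf : ∀ η, |f η| ≤ jb η ^ s) (α : Fin n → ℕ) :
    ∃ C, 0 < C ∧ ∀ ξ, |fdiff α f ξ| ≤ C * (1 + znorm ξ) ^ s := by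
  set S := ∑ β : (∀ j, Fin (α j + 1)), ((∏ j, (α j).choose (β j) : ℕ) : ℝ)
  set K := (2 * (1 + znorm fun j => (α j : ℤ))) ^ |s|
  have hS : 0 ≤ S := by positivity
  have hK : 0 ≤ K := Real.rpow_nonneg (by linarith [znorm_nonneg fun j => (α j : ℤ)]) _
  refine ⟨S * K + 1, by positivity, fun ξ => ?_⟩
  have hξ : 0 ≤ (1 + znorm ξ) ^ s := Real.rpow_nonneg (by linarith [znorm_nonneg ξ]) _
  have hterm : ∀ β : (∀ j, Fin (α j + 1)),
      |f (ξ + fun j => ((β j : ℕ) : ℤ))| ≤ K * (1 + znorm ξ) ^ s := by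
    intro β
    have hβ : znorm (fun j => ((β j : ℕ) : ℤ)) ≤ znorm fun j => (α j : ℤ) :=
      znorm_le_znorm_of_abs_le fun j => by simpa using Nat.lt_succ_iff.1 (β j).isLt
    have hβ0 := znorm_nonneg fun j => ((β j : ℕ) : ℤ)
    refine (hf _).trans ((jb_add_rpow_le ξ _ s).trans ?_)
    gcongr
    exact Real.rpow_le_rpow (by linarith) (by linarith) (abs_nonneg s)
  calc |fdiff α f ξ| ≤ ∑ β : (∀ j, Fin (α j + 1)),
        ((∏ j, (α j).choose (β j) : ℕ) : ℝ) * (K * (1 + znorm ξ) ^ s) :=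
        (abs_fdiff_le α f ξ).trans (Finset.sum_le_sum fun β _ => by gcongr; exact hterm β)
    _ = S * K * (1 + znorm ξ) ^ s := by rw [← Finset.sum_mul, mul_assoc]
    _ ≤ (S * K + 1) * (1 + znorm ξ) ^ s := by gcongr; linarith

lemma fdiff_single (i : Fin n) (f : (Fin n → ℤ) → ℝ) (ξ : Fin n → ℤ) :
    fdiff (Pi.single i 1) f ξ = f (ξ + Pi.single i 1) - f ξ := by
  have hcases : ∀ β : (∀ j, Fin ((Pi.single i 1 : Fin n → ℕ) j + 1)),
      β = 0 ∨ β = fun j => Fin.last _ := by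
    intro β
    have hle : ∀ j, (β j : ℕ) ≤ (Pi.single i 1 : Fin n → ℕ) j :=
      fun j => Nat.lt_succ_iff.1 (β j).isLt
    have hoff : ∀ j, j ≠ i → (β j : ℕ) = 0 := fun j hj => by
      simpa [Pi.single_eq_of_ne hj] using hle j
    rcases Nat.le_one_iff_eq_zero_or_eq_one.1 (by simpa using hle i) with h | h
    · left; funext j; ext
      by_cases hj : j = i
      · subst hj; simpa using h
      · simpa using hoff j hj
    · right; funext j; ext
      by_cases hj : j = i
      · subst hj; simpa using h
      · simpa [Pi.single_eq_of_ne hj] using hoff j hj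
  have hshift : (fun j => (((Pi.single i 1 : Fin n → ℕ) j : ℕ) : ℤ)) = Pi.single i 1 := by
    ext j; by_cases hj : j = i <;> simp [hj]
  rw [fdiff, Fintype.sum_eq_add _ _ (fun h => by simpa using congrFun h i)
    (fun β hβ => ((hcases β).elim hβ.1 hβ.2).elim)]
  simp [Finset.sum_pi_single', hshift, ← Pi.zero_def, sub_eq_neg_add]

lemma not_exists_abs_le_one_add_znorm_rpow_sub {g : (Fin n → ℤ) → ℝ} {s ε : ℝ} (hε : 0 < ε)
    (ξ : ℕ → Fin n → ℤ) (hξ : Tendsto (fun k => znorm (ξ k)) atTop atTop)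
    (hg : ∀ᶠ k in atTop, |g (ξ k)| = jb (ξ k) ^ s) :
    ¬ ∃ C, ∀ η, |g η| ≤ C * (1 + znorm η) ^ (s - ε) := by
  rintro ⟨C, hC⟩
  have hbound : ∀ᶠ k in atTop, (1 + znorm (ξ k)) ^ ε ≤ 2 ^ |s| * C := by
    filter_upwards [hg] with k hk
    have hpos : 0 < 1 + znorm (ξ k) := by linarith [znorm_nonneg (ξ k)]
    have hcmp : (1 + znorm (ξ k)) ^ s ≤ 2 ^ |s| * jb (ξ k) ^ s :=
      rpow_le_pow_abs_mul_rpow_of_le_mul hpos (jb_pos _) (one_add_znorm_le_two_mul_jb _)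
        (by linarith [jb_le_one_add_znorm (ξ k), znorm_nonneg (ξ k)]) s
    calc (1 + znorm (ξ k)) ^ ε = (1 + znorm (ξ k)) ^ s / (1 + znorm (ξ k)) ^ (s - ε) := by
          rw [Real.rpow_sub hpos, div_div_cancel₀ (Real.rpow_pos_of_pos hpos _).ne']
      _ ≤ 2 ^ |s| * C := by
          rw [div_le_iff₀ (Real.rpow_pos_of_pos hpos _), mul_assoc]
          exact hcmp.trans (mul_le_mul_of_nonneg_left (hk ▸ hC (ξ k)) (by positivity))
  have hunbounded : Tendsto (fun k => (1 + znorm (ξ k)) ^ ε) atTop atTop :=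
    (tendsto_rpow_atTop hε).comp (tendsto_atTop_add_const_left _ 1 hξ)
  obtain ⟨k, hk, hk'⟩ := (hbound.and (hunbounded.eventually_gt_atTop (2 ^ |s| * C))).exists
  exact hk'.not_ge hk

end Differences

section ExoticSymbol

variable {n : ℕ}

def dyadicPoint (i : Fin n) (k : ℕ) : Fin n → ℤ :=
  fun j => 2 ^ k * (Pi.single i (1 : ℤ) : Fin n → ℤ) j

lemma dyadicPoint_eq_single (i : Fin n) (k : ℕ) : dyadicPoint i k = Pi.single i (2 ^ k) := by
  ext j; by_cases hj : j = i <;> simp [dyadicPoint, hj]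

lemma znorm_dyadicPoint (i : Fin n) (k : ℕ) : znorm (dyadicPoint i k) = 2 ^ k := by
  rw [dyadicPoint_eq_single, znorm_single]; simp

lemma two_pow_add_one_ne_two_pow {k : ℕ} (hk : k ≠ 0) (m : ℕ) : (2 : ℤ) ^ k + 1 ≠ 2 ^ m := by
  intro h
  have hodd : Odd ((2 : ℤ) ^ m) := h ▸ (Int.even_pow.2 ⟨even_two, hk⟩).add_one
  rcases m with _ | m
  · simp at h
  · exact Int.not_even_iff_odd.2 hodd (Int.even_pow.2 ⟨even_two, m.succ_ne_zero⟩)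

variable (hn : 0 < n) (κ : ℝ)

lemma abs_exoticSymbol_le (ξ : Fin n → ℤ) : |exoticSymbol n hn κ ξ| ≤ jb ξ ^ (-κ) := by
  unfold exoticSymbol
  split_ifs
  · exact (abs_of_pos (Real.rpow_pos_of_pos (jb_pos ξ) _)).le
  · simpa using (Real.rpow_pos_of_pos (jb_pos ξ) (-κ)).le

lemma exoticSymbol_dyadicPoint (k : ℕ) :
    exoticSymbol n hn κ (dyadicPoint ⟨0, hn⟩ k) = jb (dyadicPoint ⟨0, hn⟩ k) ^ (-κ) :=
  if_pos ⟨k, rfl⟩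

lemma exoticSymbol_dyadicPoint_add_single {k : ℕ} (hk : k ≠ 0) :
    exoticSymbol n hn κ (dyadicPoint ⟨0, hn⟩ k + Pi.single ⟨0, hn⟩ 1) = 0 := by
  refine if_neg fun ⟨m, hm⟩ => two_pow_add_one_ne_two_pow hk m ?_
  simpa [dyadicPoint] using congrFun hm ⟨0, hn⟩

lemma abs_fdiff_exoticSymbol_dyadicPoint {k : ℕ} (hk : k ≠ 0) :
    |fdiff (Pi.single ⟨0, hn⟩ 1) (exoticSymbol n hn κ) (dyadicPoint ⟨0, hn⟩ k)|
      = jb (dyadicPoint ⟨0, hn⟩ k) ^ (-κ) := by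
  rw [fdiff_single, exoticSymbol_dyadicPoint_add_single hn κ hk, exoticSymbol_dyadicPoint,
    zero_sub, abs_neg, abs_of_pos (Real.rpow_pos_of_pos (jb_pos _) _)]

end ExoticSymbol

theorem exotic_symbol_class_general
    (n : ℕ) (hn : 0 < n) (κ : ℝ) :
    (∀ α : Fin n → ℕ, ∃ C : ℝ, 0 < C ∧ ∀ ξ : Fin n → ℤ,
        |fdiff α (exoticSymbol n hn κ) ξ| ≤ C * (1 + znorm ξ) ^ (-κ)) ∧
    (∀ k : ℕ, 1 ≤ k →
        |fdiff (Pi.single (⟨0, hn⟩ : Fin n) 1) (exoticSymbol n hn κ)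
            (fun j => 2 ^ k * (Pi.single (⟨0, hn⟩ : Fin n) (1 : ℤ) : Fin n → ℤ) j)|
          = jb (fun j => 2 ^ k * (Pi.single (⟨0, hn⟩ : Fin n) (1 : ℤ) : Fin n → ℤ) j) ^ (-κ)) ∧
    (∀ ε : ℝ, 0 < ε → ¬ ∃ C : ℝ, ∀ ξ : Fin n → ℤ,
        |fdiff (Pi.single (⟨0, hn⟩ : Fin n) 1) (exoticSymbol n hn κ) ξ|
          ≤ C * (1 + znorm ξ) ^ (-κ - ε)) := by
  refine ⟨exists_abs_fdiff_le_of_abs_le_jb_rpow (abs_exoticSymbol_le hn κ),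
    fun k hk => abs_fdiff_exoticSymbol_dyadicPoint hn κ (by omega), fun ε hε => ?_⟩
  refine not_exists_abs_le_one_add_znorm_rpow_sub hε (dyadicPoint ⟨0, hn⟩) ?_ ?_
  · simpa only [znorm_dyadicPoint] using tendsto_pow_atTop_atTop_of_one_lt one_lt_two
  · filter_upwards [eventually_ne_atTop 0] with k hk
    exact abs_fdiff_exoticSymbol_dyadicPoint hn κ hk

/-- torus exotic symbol, symbol class part: the exotic symbol `a`
satisfies `|Δ^α a(ξ)| ≤ C_α (1+|ξ|)^{-κ}` for every multi-index `α`; moreover for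
`ξ_k = 2^k e₁` (`k ≥ 1`) one has `|Δ^{e₁} a(ξ_k)| = ⟨ξ_k⟩^{-κ}`, and consequently no
estimate `|Δ^{e₁} a(ξ)| ≤ C (1+|ξ|)^{-κ-ε}` with `ε > 0` can hold. -/
theorem exotic_symbol_class
    (n : ℕ) (hn : 0 < n) (κ : ℝ) (hκ : 0 < κ) :
    (∀ α : Fin n → ℕ, ∃ C : ℝ, 0 < C ∧ ∀ ξ : Fin n → ℤ,
        |fdiff α (exoticSymbol n hn κ) ξ| ≤ C * (1 + znorm ξ) ^ (-κ)) ∧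
    (∀ k : ℕ, 1 ≤ k →
        |fdiff (Pi.single (⟨0, hn⟩ : Fin n) 1) (exoticSymbol n hn κ)
            (fun j => 2 ^ k * (Pi.single (⟨0, hn⟩ : Fin n) (1 : ℤ) : Fin n → ℤ) j)|
          = jb (fun j => 2 ^ k * (Pi.single (⟨0, hn⟩ : Fin n) (1 : ℤ) : Fin n → ℤ) j) ^ (-κ)) ∧
    (∀ ε : ℝ, 0 < ε → ¬ ∃ C : ℝ, ∀ ξ : Fin n → ℤ,
        |fdiff (Pi.single (⟨0, hn⟩ : Fin n) 1) (exoticSymbol n hn κ) ξ|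
          ≤ C * (1 + znorm ξ) ^ (-κ - ε)) :=
  exotic_symbol_class_general n hn κ
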